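/- arXiv:2005.04280 — 4 statements merged into one kernel-verified Lean document; each statement's English description precedes it below -/
import Mathlib

section
/- For every positive integer q, the sum over d with all prime factors dividing q of log(d)/d equals (q/φ(q)) · ∑_{p | q} log(p)/(p-1). -/
/-! Every `s`-factored number is uniquely `p ^ e * n` with `p ∈ s` prime and `n` an
`(s \ {p})`-factored number, and
`log (p ^ e n) / (p ^ e n) = e log p · p⁻ᵉ · n⁻¹ + p⁻ᵉ · log n / n`.
Summing over `e` with `∑ p⁻ᵉ = (1 - p⁻¹)⁻¹` and `∑ e p⁻ᵉ = (1 - p⁻¹)⁻¹ / (p - 1)`, and over `n`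
with the Euler product `∑ n⁻¹ = ∏ (1 - p⁻¹)⁻¹`, induction on `s` gives
`∑ log n / n = ∏_{p ∈ s} (1 - p⁻¹)⁻¹ · ∑_{p ∈ s} log p / (p - 1)`.
For `s` the prime factors of `q` the product is `q / φ q`. -/

open Finset

theorem HasSum.mul_of_nonneg {ι κ : Type*} {f : ι → ℝ} {g : κ → ℝ} {a b : ℝ}
    (hf : HasSum f a) (hg : HasSum g b) (hf₀ : 0 ≤ f) (hg₀ : 0 ≤ g) :
    HasSum (fun x : ι × κ ↦ f x.1 * g x.2) (a * b) :=
  hf.mul hg (hf.summable.mul_of_nonneg hg.summable hf₀ hg₀)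

namespace Real

theorem log_pow_mul_div_pow_mul {x y : ℝ} (hx : x ≠ 0) (hy : y ≠ 0) (e : ℕ) :
    log (x ^ e * y) / (x ^ e * y) =
      log x * (e * x⁻¹ ^ e) * y⁻¹ + x⁻¹ ^ e * (log y / y) := by
  rw [log_mul (pow_ne_zero e hx) hy, log_pow, inv_pow]
  field_simp

theorem hasSum_log_mul_coe_mul_inv_pow {x : ℝ} (hx : 1 < x) :
    HasSum (fun e : ℕ ↦ log x * (e * x⁻¹ ^ e)) ((1 - x⁻¹)⁻¹ * (log x / (x - 1))) := by
  have hx₀ : 0 < x := zero_lt_one.trans hx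
  have hx₁ : x - 1 ≠ 0 := sub_ne_zero.2 hx.ne'
  have hnorm : ‖x⁻¹‖ < 1 := by
    rw [norm_inv, norm_of_nonneg hx₀.le]
    exact inv_lt_one_of_one_lt₀ hx
  have hvalue : (1 - x⁻¹)⁻¹ * (log x / (x - 1)) = log x * (x⁻¹ / (1 - x⁻¹) ^ 2) := by
    rw [show 1 - x⁻¹ = (x - 1) / x by field_simp]
    field_simp
  rw [hvalue]
  exact (hasSum_coe_mul_geometric_of_norm_lt_one hnorm).mul_left (log x)

end Real

namespace Nat

theorem hasSum_inv_factoredNumbers {s : Finset ℕ} (hs : ∀ p ∈ s, p.Prime) :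
    HasSum (fun m : factoredNumbers s ↦ ((m : ℕ) : ℝ)⁻¹) (∏ p ∈ s, (1 - (p : ℝ)⁻¹)⁻¹) := by
  have h := (EulerProduct.summable_and_hasSum_factoredNumbers_prod_filter_prime_geometric
    (f := invMonoidHom.comp (castRingHom ℝ : ℕ →* ℝ)) (fun hp ↦ ?_) s).2
  · rwa [filter_true_of_mem hs] at h
  · rw [MonoidHom.comp_apply, invMonoidHom_apply, norm_inv, MonoidHom.coe_coe,
      coe_castRingHom, Real.norm_natCast]
    exact inv_lt_one_of_one_lt₀ (mod_cast hp.one_lt)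

theorem hasSum_log_div_factoredNumbers {s : Finset ℕ} (hs : ∀ p ∈ s, p.Prime) :
    HasSum (fun m : factoredNumbers s ↦ Real.log (m : ℕ) / (m : ℕ))
      ((∏ p ∈ s, (1 - (p : ℝ)⁻¹)⁻¹) * ∑ p ∈ s, Real.log p / (p - 1)) := by
  induction s using Finset.induction with
  | empty =>
    rw [factoredNumbers_empty, prod_empty, sum_empty, mul_zero]
    convert hasSum_zero with ⟨m, hm⟩
    simp [Set.mem_singleton_iff.1 hm]
  | @insert p s hps ih =>
    have hp : p.Prime := hs p (mem_insert_self p s)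
    have hs' : ∀ q ∈ s, q.Prime := fun q hq ↦ hs q (mem_insert_of_mem hq)
    have hp₁ : (1 : ℝ) < p := mod_cast hp.one_lt
    have hpowers := (Real.hasSum_log_mul_coe_mul_inv_pow hp₁).mul_of_nonneg
      (hasSum_inv_factoredNumbers hs') (fun e ↦ by positivity) (fun m ↦ by positivity)
    have hgeom := hasSum_geometric_of_lt_one (by positivity) (inv_lt_one_of_one_lt₀ hp₁)
    have hlogs := hgeom.mul_of_nonneg (ih hs') (fun e ↦ by positivity)
      (fun m ↦ div_nonneg (Real.log_natCast_nonneg _) (cast_nonneg _))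
    rw [← (equivProdNatFactoredNumbers hp hps).hasSum_iff]
    convert hpowers.add hlogs using 1
    · ext ⟨e, m⟩
      simp only [Function.comp_apply, equivProdNatFactoredNumbers_apply', cast_mul, cast_pow]
      exact Real.log_pow_mul_div_pow_mul (mod_cast hp.ne_zero)
        (mod_cast ne_zero_of_mem_factoredNumbers m.2) e
    · rw [prod_insert hps, sum_insert hps]
      ring

theorem mem_factoredNumbers_primeFactors {q d : ℕ} (hq : q ≠ 0) :
    d ∈ factoredNumbers q.primeFactors ↔ 0 < d ∧ ∀ p : ℕ, p.Prime → p ∣ d → p ∣ q := by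
  constructor
  · intro hd
    exact ⟨pos_of_ne_zero (ne_zero_of_mem_factoredNumbers hd),
      fun p hp hpd ↦ dvd_of_mem_primeFactors (mem_factoredNumbers'.1 hd p hp hpd)⟩
  · rintro ⟨-, hd⟩
    exact mem_factoredNumbers'.2 fun p hp hpd ↦ mem_primeFactors.2 ⟨hp, hd p hp hpd, hq⟩

theorem cast_div_totient {q : ℕ} (hq : q ≠ 0) :
    (q : ℝ) / q.totient = ∏ p ∈ q.primeFactors, (1 - (p : ℝ)⁻¹)⁻¹ := by
  have hφ : (q.totient : ℝ) = q * ∏ p ∈ q.primeFactors, (1 - (p : ℝ)⁻¹) := by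
    simpa using congrArg (Rat.cast : ℚ → ℝ) (totient_eq_mul_prod_factors q)
  have hprod : ∏ p ∈ q.primeFactors, (1 - (p : ℝ)⁻¹) ≠ 0 :=
    prod_ne_zero_iff.2 fun p hp ↦
      (sub_pos.2 (inv_lt_one_of_one_lt₀ (mod_cast (prime_of_mem_primeFactors hp).one_lt))).ne'
  rw [hφ, prod_inv_distrib]
  field_simp

end Nat

theorem stmt_2 (q : ℕ) (hq : 0 < q) :
    ∑' d : {d : ℕ // 0 < d ∧ ∀ p : ℕ, p.Prime → p ∣ d → p ∣ q},
        Real.log (d : ℕ) / (d : ℕ) =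
      ((q : ℝ) / q.totient) * ∑ p ∈ q.primeFactors, Real.log p / (p - 1) := by
  let e := Equiv.subtypeEquivRight fun d ↦
    (Nat.mem_factoredNumbers_primeFactors hq.ne' (d := d)).symm
  have hsum := Nat.hasSum_log_div_factoredNumbers fun p ↦ Nat.prime_of_mem_primeFactors (n := q)
  rw [Nat.cast_div_totient hq.ne']
  exact (e.hasSum_iff.2 hsum).tsum_eq
end

section
/- Let X, Z, m, n be real numbers with m > 1, n > 0, and 1 ≤ Z < X. Then ∫_1^Z du/(u^m log^n(X/u)) ≤ (1/(m-1)) (1/log^n(X/√Z) + 1/(log^n(X/Z) √(Z^{m-1}))). -/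
/-!
Split the integral at `√Z`. On a piece `[a, b]` with `b < X`, the factor `log (X / u) ^ n` is
smallest at `u = b`, and `∫_a^b u^(-m) ≤ a^(1-m)/(m-1)`; this gives `1/((m-1) log^n (X/√Z))`
on `[1, √Z]` and `(√Z)^(1-m)/((m-1) log^n (X/Z))` on `[√Z, Z]`.
-/

open Real intervalIntegral Set MeasureTheory

lemma intervalIntegrable_one_div_rpow_mul_log_rpow {X a b : ℝ} (m n : ℝ) (ha : 0 < a)
    (hab : a ≤ b) (hbX : b < X) :
    IntervalIntegrable (fun u : ℝ => 1 / (u ^ m * log (X / u) ^ n)) volume a b := by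
  have hu : ∀ u ∈ Icc a b, 0 < u := fun u hu => ha.trans_le hu.1
  have hlog : ∀ u ∈ Icc a b, 0 < log (X / u) := fun u h =>
    log_pos ((one_lt_div (hu u h)).mpr (h.2.trans_lt hbX))
  refine ContinuousOn.intervalIntegrable_of_Icc hab <| continuousOn_const.div ?_ fun u h =>
    (mul_pos (rpow_pos_of_pos (hu u h) m) (rpow_pos_of_pos (hlog u h) n)).ne'
  refine (continuousOn_id.rpow_const fun u h => Or.inl (hu u h).ne').mul
    (ContinuousOn.rpow_const ?_ fun u h => Or.inl (hlog u h).ne')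
  exact (continuousOn_const.div continuousOn_id fun u h => (hu u h).ne').log
    fun u h => (div_pos ((hu u h).trans (h.2.trans_lt hbX)) (hu u h)).ne'

lemma integral_rpow_neg_le {a b m : ℝ} (hm : 1 < m) (ha : 0 < a) (hab : a ≤ b) :
    ∫ u in a..b, u ^ (-m) ≤ a ^ (1 - m) / (m - 1) := by
  have hb : 0 < b := ha.trans_le hab
  rw [integral_rpow (Or.inr ⟨by linarith, fun h => (uIcc_of_le hab ▸ h).1.not_gt ha⟩),
    show -m + 1 = 1 - m by ring, show a ^ (1 - m) / (m - 1) = (0 - a ^ (1 - m)) / (1 - m) by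
      field_simp [show 1 - m ≠ 0 by linarith, show m - 1 ≠ 0 by linarith]; ring]
  exact div_le_div_of_nonpos_of_le (by linarith) (by linarith [rpow_nonneg hb.le (1 - m)])

lemma integral_one_div_rpow_mul_log_rpow_le {X a b m n : ℝ} (hm : 1 < m) (hn : 0 ≤ n)
    (ha : 0 < a) (hab : a ≤ b) (hbX : b < X) :
    ∫ u in a..b, 1 / (u ^ m * log (X / u) ^ n) ≤
      a ^ (1 - m) / ((m - 1) * log (X / b) ^ n) := by
  have hb : 0 < b := ha.trans_le hab
  have hlogb : 0 < log (X / b) := log_pos ((one_lt_div hb).mpr hbX)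
  have hu : ∀ u ∈ Icc a b, 0 < u := fun u hu => ha.trans_le hu.1
  have hbound : ∀ u ∈ Icc a b,
      1 / (u ^ m * log (X / u) ^ n) ≤ (log (X / b) ^ n)⁻¹ * u ^ (-m) := by
    intro u h
    have hu0 := hu u h
    have hlog : log (X / b) ≤ log (X / u) :=
      log_le_log (div_pos (hb.trans hbX) hb) (div_le_div_of_nonneg_left (by linarith) hu0 h.2)
    rw [rpow_neg hu0.le, ← mul_inv, one_div, mul_comm]
    gcongr
  calc ∫ u in a..b, 1 / (u ^ m * log (X / u) ^ n)
      ≤ ∫ u in a..b, (log (X / b) ^ n)⁻¹ * u ^ (-m) := by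
        refine integral_mono_on hab ?_ ?_ hbound
        · exact intervalIntegrable_one_div_rpow_mul_log_rpow m n ha hab hbX
        · exact (continuousOn_const.mul (continuousOn_id.rpow_const fun u h =>
            Or.inl (hu u h).ne')).intervalIntegrable_of_Icc hab
    _ ≤ (log (X / b) ^ n)⁻¹ * (a ^ (1 - m) / (m - 1)) := by
        rw [intervalIntegral.integral_const_mul]
        exact mul_le_mul_of_nonneg_left (integral_rpow_neg_le hm ha hab) (by positivity)
    _ = a ^ (1 - m) / ((m - 1) * log (X / b) ^ n) := by
        field_simp [(rpow_pos_of_pos hlogb n).ne']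

lemma sqrt_rpow_eq {x : ℝ} (hx : 0 ≤ x) (y : ℝ) : √(x ^ y) = √x ^ y := by
  rw [sqrt_eq_rpow, sqrt_eq_rpow, ← rpow_mul hx, ← rpow_mul hx, mul_comm]

theorem stmt_10 (X Z m n : ℝ) (hm : 1 < m) (hn : 0 < n) (hZ : 1 ≤ Z) (hZX : Z < X) :
    ∫ u in (1:ℝ)..Z, 1 / (u ^ m * Real.log (X / u) ^ n) ≤
      (1 / (m - 1)) *
        (1 / Real.log (X / Real.sqrt Z) ^ n +
          1 / (Real.log (X / Z) ^ n * Real.sqrt (Z ^ (m - 1)))) := by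
  have hZ0 : 0 < Z := one_pos.trans_le hZ
  have hs1 : 1 ≤ √Z := one_le_sqrt.2 hZ
  have hsZ : √Z ≤ Z := sqrt_le_self_iff.2 (Or.inr hZ)
  rw [← integral_add_adjacent_intervals
    (intervalIntegrable_one_div_rpow_mul_log_rpow m n one_pos hs1 (hsZ.trans_lt hZX))
    (intervalIntegrable_one_div_rpow_mul_log_rpow m n (one_pos.trans_le hs1) hsZ hZX)]
  have h₁ := integral_one_div_rpow_mul_log_rpow_le hm hn.le one_pos hs1 (hsZ.trans_lt hZX)
  have h₂ := integral_one_div_rpow_mul_log_rpow_le hm hn.le (one_pos.trans_le hs1) hsZ hZX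
  refine (add_le_add h₁ h₂).trans_eq ?_
  rw [one_rpow, sqrt_rpow_eq hZ0.le, show 1 - m = -(m - 1) by ring, rpow_neg (sqrt_nonneg Z)]
  simp only [div_eq_mul_inv, mul_inv]
  ring
end

section
/- Let q be a positive integer. Then ∑_{d ≥ 1, gcd(d,q)=1} μ²(d)/(φ(d)κ(d)) · ∑_{p | d} log(p)/(p-1) = (∑_{d ≥ 1, gcd(d,q)=1} μ²(d)/(φ(d)κ(d))) · ∑_{p prime, p ∤ q} log(p)/(p²(p-1)). -/
open ArithmeticFunction

/-- `κ(n) = n ∏_{p | n} (1 + 1/p)`. -/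
noncomputable def kappa (n : ℕ) : ℝ :=
  n * ∏ p ∈ n.primeFactors, (1 + 1 / (p : ℝ))

/-!
For squarefree `d` one has `φ(d) κ(d) = ∏_{p ∣ d} (p² - 1)`, so `f(d) = μ²(d)/(φ(d)κ(d))` is the
multiplicative function supported on squarefree numbers with `f(p) = 1/(p² - 1)`; it is
`O(d^{-3/2})`, which makes every series absolutely convergent. Exchanging the sum over `d` with
the sum over `p ∣ d`, the left side becomes `∑_{p ∤ q} log p/(p - 1) · ∑_{(d,q)=1, p ∣ d} f(d)`.
Writing `d = p e`, the inner sum is `f(p) G'` with `G' = ∑_{(e,q)=1, p ∤ e} f(e)`, while splitting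
`G_q = ∑_{(d,q)=1} f(d)` according to whether `p ∣ d` gives
`G_q = (1 + f(p)) G' = p²/(p² - 1) · G'`. Hence the inner sum is `G_q / p²`.
-/

theorem tsum_mul_sum_comm {α β : Type*} [DecidableEq β] {a : α → ℝ} {w : β → ℝ}
    (S : α → Finset β) (ha : 0 ≤ a) (hw : 0 ≤ w)
    (h : Summable fun x => a x * ∑ y ∈ S x, w y) :
    ∑' x, a x * ∑ y ∈ S x, w y = ∑' y, w y * ∑' x, if y ∈ S x then a x else 0 := by
  set W : α × β → ℝ := fun z => if z.2 ∈ S z.1 then a z.1 * w z.2 else 0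
  have hW : 0 ≤ W := fun z => by
    simp only [W]
    split_ifs
    exacts [mul_nonneg (ha _) (hw _), le_rfl]
  have hrow : ∀ x, ∑' y, W (x, y) = a x * ∑ y ∈ S x, w y := fun x => by
    rw [tsum_eq_sum (s := S x) fun y hy => if_neg hy, Finset.mul_sum]
    exact Finset.sum_congr rfl fun y hy => if_pos hy
  have hcol : ∀ y, ∑' x, W (x, y) = w y * ∑' x, if y ∈ S x then a x else 0 := fun y => by
    rw [← tsum_mul_left]
    exact tsum_congr fun x => by simp only [W]; split_ifs <;> ring
  have hW_summable : Summable W := (summable_prod_of_nonneg hW).2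
    ⟨fun x => summable_of_ne_finset_zero (s := S x) fun y hy => if_neg hy,
      by simpa only [hrow] using h⟩
  calc ∑' x, a x * ∑ y ∈ S x, w y = ∑' x, ∑' y, W (x, y) := by simp only [hrow]
    _ = ∑' y, ∑' x, W (x, y) := (hW_summable.tsum_comm (f := fun x y => W (x, y))).symm
    _ = _ := by simp only [hcol]

namespace MoebiusKappa

noncomputable def weight (d : ℕ) : ℝ :=
  if Squarefree d then ∏ p ∈ d.primeFactors, ((p : ℝ) ^ 2 - 1)⁻¹ else 0

lemma one_lt_sq_of_prime {p : ℕ} (hp : p.Prime) : 1 < (p : ℝ) ^ 2 := by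
  have : (2 : ℝ) ≤ p := by exact_mod_cast hp.two_le
  nlinarith

lemma cast_eq_prod_primeFactors_of_squarefree {d : ℕ} (hd : Squarefree d) :
    (d : ℝ) = ∏ p ∈ d.primeFactors, (p : ℝ) := by
  rw [← Nat.cast_prod, Nat.prod_primeFactors_of_squarefree hd]

lemma totient_mul_kappa_of_squarefree {d : ℕ} (hd : Squarefree d) :
    (d.totient : ℝ) * kappa d = ∏ p ∈ d.primeFactors, ((p : ℝ) ^ 2 - 1) := by
  have htot : (d.totient : ℝ) = d * ∏ p ∈ d.primeFactors, (1 - (p : ℝ)⁻¹) := by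
    have h := congrArg ((↑) : ℚ → ℝ) (Nat.totient_eq_mul_prod_factors d)
    push_cast at h
    exact h
  rw [htot, kappa, mul_mul_mul_comm, cast_eq_prod_primeFactors_of_squarefree hd,
    ← Finset.prod_mul_distrib, ← Finset.prod_mul_distrib, ← Finset.prod_mul_distrib]
  refine Finset.prod_congr rfl fun p hp => ?_
  have : (p : ℝ) ≠ 0 := by exact_mod_cast (Nat.prime_of_mem_primeFactors hp).ne_zero
  field_simp
  ring

lemma moebius_sq_div_totient_mul_kappa (d : ℕ) :
    (moebius d : ℝ) ^ 2 / (d.totient * kappa d) = weight d := by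
  by_cases hd : Squarefree d
  · have hμ : (moebius d : ℝ) ^ 2 = 1 := by exact_mod_cast moebius_sq_eq_one_of_squarefree hd
    rw [hμ, totient_mul_kappa_of_squarefree hd, weight, if_pos hd, one_div,
      Finset.prod_inv_distrib]
  · simp [weight, hd, moebius_eq_zero_of_not_squarefree hd]

lemma weight_zero : weight 0 = 0 := by simp [weight]

lemma weight_nonneg (d : ℕ) : 0 ≤ weight d := by
  unfold weight
  split_ifs
  · exact Finset.prod_nonneg fun p hp =>
      inv_nonneg.2 (sub_nonneg.2 (one_lt_sq_of_prime (Nat.prime_of_mem_primeFactors hp)).le)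
  · exact le_rfl

lemma weight_prime_mul {p e : ℕ} (hp : p.Prime) (hpe : ¬ p ∣ e) :
    weight (p * e) = ((p : ℝ) ^ 2 - 1)⁻¹ * weight e := by
  have hcop : p.Coprime e := (Nat.Prime.coprime_iff_not_dvd hp).2 hpe
  by_cases he : Squarefree e
  · rw [weight, if_pos (Nat.squarefree_mul_iff.2 ⟨hcop, hp.squarefree, he⟩),
      Nat.Coprime.primeFactors_mul hcop, Finset.prod_union hcop.disjoint_primeFactors,
      hp.primeFactors, Finset.prod_singleton, weight, if_pos he]
  · have : ¬ Squarefree (p * e) := fun h => he (Nat.squarefree_mul_iff.1 h).2.2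
    simp [weight, he, this]

lemma weight_prime_mul_of_dvd {p e : ℕ} (hp : p.Prime) (hpe : p ∣ e) : weight (p * e) = 0 := by
  have : ¬ Squarefree (p * e) := fun h =>
    Nat.Prime.not_coprime_iff_dvd.2 ⟨p, hp, dvd_rfl, hpe⟩ (Nat.squarefree_mul_iff.1 h).1
  simp [weight, this]

lemma rpow_three_halves_le_sq_sub_one {x : ℝ} (hx : 2 ≤ x) : x ^ (3 / 2 : ℝ) ≤ x ^ 2 - 1 := by
  have hs : Real.sqrt x ^ 2 = x := Real.sq_sqrt (by linarith)
  have h32 : x ^ (3 / 2 : ℝ) = Real.sqrt x ^ 3 := by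
    rw [Real.sqrt_eq_rpow, ← Real.rpow_natCast, ← Real.rpow_mul (by linarith)]
    norm_num
  have hs0 := Real.sqrt_nonneg x
  rw [h32]
  generalize Real.sqrt x = s at hs hs0
  subst hs
  nlinarith [sq_nonneg (s ^ 2 - s - 1)]

lemma weight_le_rpow (d : ℕ) : weight d ≤ (d : ℝ) ^ (-3 / 2 : ℝ) := by
  by_cases hd : Squarefree d
  · rw [weight, if_pos hd, cast_eq_prod_primeFactors_of_squarefree hd,
      ← Real.finsetProd_rpow _ _ fun p _ => by positivity]
    refine Finset.prod_le_prod (fun p hp => ?_) fun p hp => ?_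
    · exact inv_nonneg.2 (sub_nonneg.2 (one_lt_sq_of_prime (Nat.prime_of_mem_primeFactors hp)).le)
    · have h2 : (2 : ℝ) ≤ p := by exact_mod_cast (Nat.prime_of_mem_primeFactors hp).two_le
      rw [neg_div, Real.rpow_neg (by linarith)]
      exact inv_anti₀ (by positivity) (rpow_three_halves_le_sq_sub_one h2)
  · rw [weight, if_neg hd]
    positivity

lemma summable_weight : Summable weight :=
  Summable.of_nonneg_of_le weight_nonneg weight_le_rpow (Real.summable_nat_rpow.2 (by norm_num))

lemma log_div_sub_one_nonneg (n : ℕ) : 0 ≤ Real.log n / ((n : ℝ) - 1) := by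
  rcases Nat.eq_zero_or_pos n with rfl | hn
  · simp
  · have : (1 : ℝ) ≤ n := by exact_mod_cast hn
    exact div_nonneg (Real.log_nonneg this) (by linarith)

lemma sum_primeFactors_log_div_sub_one_le_log {d : ℕ} (hd : d ≠ 0) :
    ∑ p ∈ d.primeFactors, Real.log p / ((p : ℝ) - 1) ≤ Real.log d := by
  have hprimes : ∀ p ∈ d.primeFactors, (2 : ℝ) ≤ p := fun p hp => by
    exact_mod_cast (Nat.prime_of_mem_primeFactors hp).two_le
  calc ∑ p ∈ d.primeFactors, Real.log p / ((p : ℝ) - 1)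
      ≤ ∑ p ∈ d.primeFactors, Real.log p := Finset.sum_le_sum fun p hp =>
        div_le_self (Real.log_nonneg (by linarith [hprimes p hp])) (by linarith [hprimes p hp])
    _ = Real.log (∏ p ∈ d.primeFactors, p : ℕ) := by
        rw [Nat.cast_prod, Real.log_prod fun p hp => by linarith [hprimes p hp]]
    _ ≤ Real.log d := Real.log_le_log
        (Nat.cast_pos.2 (Finset.prod_pos fun p hp => Nat.pos_of_mem_primeFactors hp))
        (by exact_mod_cast Nat.le_of_dvd (Nat.pos_of_ne_zero hd) (Nat.prod_primeFactors_dvd d))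

lemma summable_weight_mul_sum_log :
    Summable fun d => weight d * ∑ p ∈ d.primeFactors, Real.log p / ((p : ℝ) - 1) := by
  refine Summable.of_nonneg_of_le
    (fun d => mul_nonneg (weight_nonneg d) (Finset.sum_nonneg fun p _ => log_div_sub_one_nonneg p))
    (fun d => ?_) ((Real.summable_nat_rpow.2 (by norm_num : (-5 / 4 : ℝ) < -1)).mul_left 4)
  rcases Nat.eq_zero_or_pos d with rfl | hd
  · simp [weight_zero]
  have hd' : (0 : ℝ) < d := by exact_mod_cast hd
  calc weight d * ∑ p ∈ d.primeFactors, Real.log p / ((p : ℝ) - 1)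
      ≤ (d : ℝ) ^ (-3 / 2 : ℝ) * ((d : ℝ) ^ (1 / 4 : ℝ) / (1 / 4)) :=
        mul_le_mul (weight_le_rpow d)
          ((sum_primeFactors_log_div_sub_one_le_log hd.ne').trans
            (Real.log_le_rpow_div hd'.le (by norm_num)))
          (Finset.sum_nonneg fun p _ => log_div_sub_one_nonneg p) (by positivity)
    _ = 4 * ((d : ℝ) ^ (-3 / 2 : ℝ) * (d : ℝ) ^ (1 / 4 : ℝ)) := by ring
    _ = 4 * (d : ℝ) ^ (-5 / 4 : ℝ) := by rw [← Real.rpow_add hd']; norm_num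

lemma tsum_indicator_coprime_split (p q : ℕ) :
    ∑' d, {d | d.Coprime q}.indicator weight d =
      ∑' d, {d | d.Coprime q ∧ ¬ p ∣ d}.indicator weight d +
        ∑' d, {d | d.Coprime q ∧ p ∣ d}.indicator weight d := by
  rw [← (summable_weight.indicator _).tsum_add (summable_weight.indicator _)]
  refine tsum_congr fun d => ?_
  by_cases h : p ∣ d <;> simp [Set.indicator_apply, h]

lemma tsum_indicator_coprime_dvd {p q : ℕ} (hp : p.Prime) (hpq : ¬ p ∣ q) :
    ∑' d, {d | d.Coprime q ∧ p ∣ d}.indicator weight d =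
      ((p : ℝ) ^ 2 - 1)⁻¹ * ∑' e, {e | e.Coprime q ∧ ¬ p ∣ e}.indicator weight e := by
  rw [← tsum_mul_left, ← (mul_right_injective₀ hp.ne_zero).tsum_eq]
  · refine tsum_congr fun e => ?_
    by_cases hpe : p ∣ e
    · simp [Set.indicator_apply, hpe, weight_prime_mul_of_dvd hp hpe]
    · have hcop : (p * e).Coprime q ↔ e.Coprime q := by
        rw [Nat.coprime_mul_iff_left, and_iff_right ((hp.coprime_iff_not_dvd).2 hpq)]
      simp [Set.indicator_apply, hpe, hcop, weight_prime_mul hp hpe]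
  · intro d hd
    obtain ⟨e, rfl⟩ := (Set.mem_of_indicator_ne_zero hd).2
    exact ⟨e, rfl⟩

lemma tsum_indicator_coprime_dvd_eq_div {p q : ℕ} (hp : p.Prime) (hpq : ¬ p ∣ q) :
    ∑' d, {d | d.Coprime q ∧ p ∣ d}.indicator weight d =
      (∑' d, {d | d.Coprime q}.indicator weight d) / (p : ℝ) ^ 2 := by
  rw [tsum_indicator_coprime_split p q, tsum_indicator_coprime_dvd hp hpq]
  have hp0 : (p : ℝ) ≠ 0 := by exact_mod_cast hp.ne_zero
  have hp2 : (p : ℝ) ^ 2 - 1 ≠ 0 := (sub_pos.2 (one_lt_sq_of_prime hp)).ne'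
  field_simp
  ring

lemma log_div_sub_one_mul_tsum_primeFactors (p q : ℕ) :
    Real.log p / ((p : ℝ) - 1) *
        ∑' d, (if p ∈ d.primeFactors then {d | d.Coprime q}.indicator weight d else 0) =
      {p | p.Prime ∧ ¬ p ∣ q}.indicator (fun p => Real.log p / ((p : ℝ) ^ 2 * ((p : ℝ) - 1))) p *
        ∑' d, {d | d.Coprime q}.indicator weight d := by
  by_cases hp : p.Prime ∧ ¬ p ∣ q
  · have hterm : ∀ d, (if p ∈ d.primeFactors then {d | d.Coprime q}.indicator weight d else 0) =
        {d | d.Coprime q ∧ p ∣ d}.indicator weight d := fun d => by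
      rcases eq_or_ne d 0 with rfl | hd
      · simp [Set.indicator_apply, weight_zero]
      · by_cases hpd : p ∣ d <;> simp [Set.indicator_apply, hp.1, hd, hpd]
    rw [tsum_congr hterm, tsum_indicator_coprime_dvd_eq_div hp.1 hp.2,
      Set.indicator_of_mem (show p ∈ {p | p.Prime ∧ ¬ p ∣ q} from hp),
      div_mul_div_comm, div_mul_eq_mul_div]
    ring
  · have hterm : ∀ d, (if p ∈ d.primeFactors then {d | d.Coprime q}.indicator weight d else 0) =
        0 := fun d => by
      split_ifs with hpd
      · obtain ⟨hp_prime, hpd, -⟩ := Nat.mem_primeFactors.1 hpd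
        refine Set.indicator_of_notMem (fun hdq => hp ⟨hp_prime, fun hpq => ?_⟩) _
        exact hp_prime.ne_one (Nat.eq_one_of_dvd_coprimes hdq hpd hpq)
      · rfl
    rw [tsum_congr hterm, tsum_zero, mul_zero,
      Set.indicator_of_notMem (show p ∉ {p | p.Prime ∧ ¬ p ∣ q} from hp), zero_mul]

end MoebiusKappa

open MoebiusKappa in
theorem stmt_13_general (q : ℕ) :
    ∑' d : {d : ℕ // Nat.gcd d q = 1},
        ((moebius (d : ℕ) : ℝ)) ^ 2 / ((d : ℕ).totient * kappa (d : ℕ)) *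
          ∑ p ∈ (d : ℕ).primeFactors, Real.log p / ((p : ℝ) - 1) =
      (∑' d : {d : ℕ // Nat.gcd d q = 1},
          ((moebius (d : ℕ) : ℝ)) ^ 2 / ((d : ℕ).totient * kappa (d : ℕ))) *
        ∑' p : {p : ℕ // p.Prime ∧ ¬ p ∣ q},
          Real.log (p : ℕ) / (((p : ℕ) : ℝ) ^ 2 * ((p : ℕ) - 1)) := by
  have hsub (P : ℕ → Prop) (f : ℕ → ℝ) :
      ∑' x : {x // P x}, f x = ∑' x, {x | P x}.indicator f x := tsum_subtype {x | P x} f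
  simp only [moebius_sq_div_totient_mul_kappa]
  rw [hsub (fun d => d.Coprime q)
      (fun d => weight d * ∑ p ∈ d.primeFactors, Real.log p / ((p : ℝ) - 1)),
    hsub (fun d => d.Coprime q), hsub (fun p => p.Prime ∧ ¬ p ∣ q)
      (fun p => Real.log p / ((p : ℝ) ^ 2 * ((p : ℝ) - 1))), ← tsum_mul_left]
  simp only [Set.indicator_mul_left]
  rw [tsum_mul_sum_comm _ (fun d => Set.indicator_nonneg (fun d _ => weight_nonneg d) d)
    log_div_sub_one_nonneg ?_]
  · exact tsum_congr fun p => by rw [log_div_sub_one_mul_tsum_primeFactors, mul_comm]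
  · exact (summable_weight_mul_sum_log.indicator _).congr fun d => Set.indicator_mul_left _ _ _

theorem stmt_13 (q : ℕ) (hq : 0 < q) :
    ∑' d : {d : ℕ // Nat.gcd d q = 1},
        ((moebius (d : ℕ) : ℝ)) ^ 2 / ((d : ℕ).totient * kappa (d : ℕ)) *
          ∑ p ∈ (d : ℕ).primeFactors, Real.log p / ((p : ℝ) - 1) =
      (∑' d : {d : ℕ // Nat.gcd d q = 1},
          ((moebius (d : ℕ) : ℝ)) ^ 2 / ((d : ℕ).totient * kappa (d : ℕ))) *
        ∑' p : {p : ℕ // p.Prime ∧ ¬ p ∣ q},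
          Real.log (p : ℕ) / (((p : ℕ) : ℝ) ^ 2 * ((p : ℕ) - 1)) :=
  stmt_13_general q
end

section
/- Let q be a positive integer, X > 0, and let κ(n) = n∏_{p|n}(1+1/p). Then ∑_{n ≤ X, (n,q)=1} (μ(n)/n) log²(X/n) ∑_{d|n} μ(d)/κ(d) = ∑_{d ≥ 1, (d,q)=1} (μ²(d)/(dκ(d))) · čč_{dq}(X/d), where čč_m(Y) = ∑_{n ≤ Y, (n,m)=1} (μ(n)/n) log²(Y/n). -/
open ArithmeticFunction

/-- `čč_m(Y) = ∑_{n ≤ Y, (n,m)=1} (μ(n)/n) log²(Y/n)`. -/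
noncomputable def mcheckcheck (m : ℕ) (Y : ℝ) : ℝ :=
  ∑ n ∈ (Finset.Icc 1 ⌊Y⌋₊).filter (fun n => Nat.gcd n m = 1),
    ((moebius n : ℝ) / n) * (Real.log (Y / n)) ^ 2

lemma kappa_pos {n : ℕ} (hn : 0 < n) : 0 < kappa n := by
  unfold kappa
  apply mul_pos (by exact_mod_cast hn)
  apply Finset.prod_pos
  intro p hp
  have hp0 : 0 < (p : ℝ) := by exact_mod_cast (Nat.pos_of_mem_primeFactors hp)
  positivity

theorem stmt_14 (q : ℕ) (hq : 0 < q) (X : ℝ) (hX : 0 < X) :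
    ∑ n ∈ (Finset.Icc 1 ⌊X⌋₊).filter (fun n => Nat.gcd n q = 1),
        ((moebius n : ℝ) / n) * (Real.log (X / n)) ^ 2 *
          ∑ d ∈ n.divisors, (moebius d : ℝ) / kappa d =
      ∑' d : {d : ℕ // 0 < d ∧ Nat.gcd d q = 1},
        ((moebius (d : ℕ) : ℝ)) ^ 2 / ((d : ℕ) * kappa (d : ℕ)) *
          mcheckcheck ((d : ℕ) * q) (X / (d : ℕ)) := by
  classical
  -- Step 1: the tsum is a finite sum
  have hts : (∑' d : {d : ℕ // 0 < d ∧ Nat.gcd d q = 1},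
        ((moebius (d : ℕ) : ℝ)) ^ 2 / ((d : ℕ) * kappa (d : ℕ)) *
          mcheckcheck ((d : ℕ) * q) (X / (d : ℕ))) =
      ∑ d ∈ (Finset.Icc 1 ⌊X⌋₊).filter (fun d => Nat.gcd d q = 1),
        ((moebius d : ℝ)) ^ 2 / (d * kappa d) * mcheckcheck (d * q) (X / d) := by
    rw [tsum_eq_sum (s := (Finset.Icc 1 ⌊X⌋₊).subtype (fun d => 0 < d ∧ Nat.gcd d q = 1))]
    · rw [Finset.sum_subtype_eq_sum_filter
        (fun d : ℕ => ((moebius d : ℝ)) ^ 2 / (d * kappa d) * mcheckcheck (d * q) (X / d))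
        (p := fun d => 0 < d ∧ Nat.gcd d q = 1)]
      apply Finset.sum_congr
      · apply Finset.filter_congr
        intro x hx
        simp only [Finset.mem_Icc] at hx
        simp [Nat.lt_of_lt_of_le Nat.zero_lt_one hx.1]
      · intro x _; rfl
    · rintro ⟨d, hd, hdq⟩ hb
      simp only [Finset.mem_subtype, Finset.mem_Icc, not_and, not_le] at hb
      have hdX : ⌊X⌋₊ < d := hb hd
      have hXd : X < d := (Nat.floor_lt hX.le).mp hdX
      have h0 : ⌊X / (d : ℝ)⌋₊ = 0 := by
        rw [Nat.floor_eq_zero, div_lt_one (by exact_mod_cast hd)]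
        exact hXd
      have : mcheckcheck (d * q) (X / d) = 0 := by
        unfold mcheckcheck
        rw [h0]; simp
      rw [this, mul_zero]
  rw [hts]
  -- Step 2: expand both sides into sums over pairs
  rw [Finset.sum_congr rfl (fun n _ => Finset.mul_sum
    (n.divisors) (fun d => (moebius d : ℝ) / kappa d)
    (((moebius n : ℝ) / n) * (Real.log (X / n)) ^ 2))]
  unfold mcheckcheck
  rw [Finset.sum_congr rfl (fun d _ => Finset.mul_sum _ _ _)]
  rw [Finset.sum_sigma', Finset.sum_sigma']
  -- Step 3: restrict to squarefree-supported terms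
  rw [← Finset.sum_filter_of_ne (p := fun p => Squarefree p.1)
    (by
      rintro ⟨n, d⟩ hp hne
      by_contra hsq
      exact hne (by simp [moebius_eq_zero_of_not_squarefree hsq]))]
  conv_rhs => rw [← Finset.sum_filter_of_ne (p := fun p => Squarefree (p.1 * p.2))
    (by
      rintro ⟨d, e⟩ hp hne
      simp only [Finset.mem_sigma, Finset.mem_filter, Finset.mem_Icc] at hp
      by_contra hsq
      have hco : Nat.Coprime e (d * q) := hp.2.2
      have hde : Nat.Coprime d e := (Nat.Coprime.coprime_dvd_right (dvd_mul_right d q) hco).symm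
      have hns : ¬(Squarefree d ∧ Squarefree e) :=
        fun h => hsq ((Nat.squarefree_mul_iff).mpr ⟨hde, h.1, h.2⟩)
      rcases not_and_or.mp hns with h | h
      · exact hne (by simp [moebius_eq_zero_of_not_squarefree h])
      · exact hne (by simp [moebius_eq_zero_of_not_squarefree h]))]
  refine Finset.sum_nbij' (fun p => ⟨p.2, p.1 / p.2⟩) (fun p => ⟨p.1 * p.2, p.1⟩)
    ?_ ?_ ?_ ?_ ?_
  · rintro ⟨n, d⟩ hp
    simp only [Finset.mem_filter, Finset.mem_sigma, Finset.mem_Icc, Nat.mem_divisors] at hp ⊢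
    obtain ⟨⟨⟨⟨hn1, hnX⟩, hnq⟩, hdn, hn0⟩, hsq⟩ := hp
    have hd0 : 0 < d := Nat.pos_of_dvd_of_pos hdn (Nat.pos_of_ne_zero hn0)
    have hed : d * (n / d) = n := Nat.mul_div_cancel' hdn
    have hsq' : Squarefree (d * (n / d)) := by rw [hed]; exact hsq
    obtain ⟨hde, hsd, hse⟩ := Nat.squarefree_mul_iff.mp hsq'
    have he_dvd : n / d ∣ n := Nat.div_dvd_of_dvd hdn
    have he0 : 1 ≤ n / d := Nat.pos_of_dvd_of_pos he_dvd (Nat.pos_of_ne_zero hn0)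
    have hdR : (0:ℝ) < d := by exact_mod_cast hd0
    have heX : n / d ≤ ⌊X / (d:ℝ)⌋₊ := by
      rw [Nat.le_floor_iff (by positivity)]
      rw [le_div_iff₀ hdR]
      calc ((n / d : ℕ) : ℝ) * d = ((d * (n / d) : ℕ) : ℝ) := by push_cast; ring
        _ = (n : ℝ) := by rw [hed]
        _ ≤ X := by
          have := Nat.floor_le hX.le (R := ℝ)
          exact_mod_cast le_trans (Nat.cast_le.mpr hnX) this
    have heg : Nat.gcd (n / d) (d * q) = 1 :=
      Nat.Coprime.mul_right hde.symm (Nat.Coprime.coprime_dvd_left he_dvd hnq)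
    exact ⟨⟨⟨⟨hd0, le_trans (Nat.le_of_dvd (Nat.pos_of_ne_zero hn0) hdn) hnX⟩,
        Nat.Coprime.coprime_dvd_left hdn hnq⟩, ⟨he0, heX⟩, heg⟩, hsq'⟩
  · rintro ⟨d, e⟩ hp
    simp only [Finset.mem_filter, Finset.mem_sigma, Finset.mem_Icc, Nat.mem_divisors] at hp ⊢
    obtain ⟨⟨⟨⟨hd1, hdX⟩, hdq⟩, ⟨he1, heX⟩, heq⟩, hsq⟩ := hp
    have hd0 : (0:ℝ) < d := by exact_mod_cast hd1
    have hdeX : d * e ≤ ⌊X⌋₊ := by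
      rw [Nat.le_floor_iff hX.le]
      have : (e : ℝ) ≤ X / d := le_trans (Nat.cast_le.mpr heX) (Nat.floor_le (by positivity))
      rw [le_div_iff₀ hd0] at this
      push_cast
      linarith [this]
    have heq' : Nat.Coprime e q := Nat.Coprime.coprime_dvd_right (dvd_mul_left q d) heq
    have hne : d * e ≠ 0 := by positivity
    have h1 : 1 ≤ d * e := Nat.one_le_iff_ne_zero.mpr hne
    exact ⟨⟨⟨⟨h1, hdeX⟩, Nat.Coprime.mul hdq heq'⟩, dvd_mul_right d e, hne⟩, hsq⟩
  · rintro ⟨n, d⟩ hp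
    simp only [Finset.mem_filter, Finset.mem_sigma, Nat.mem_divisors] at hp
    have := Nat.mul_div_cancel' hp.1.2.1
    simp [this]
  · rintro ⟨d, e⟩ hp
    simp only [Finset.mem_filter, Finset.mem_sigma, Finset.mem_Icc] at hp
    have hd0 : 0 < d := lt_of_lt_of_le Nat.zero_lt_one hp.1.1.1.1
    simp [Nat.mul_div_cancel_left _ hd0]
  · rintro ⟨n, d⟩ hp
    simp only [Finset.mem_filter, Finset.mem_sigma, Finset.mem_Icc, Nat.mem_divisors] at hp
    obtain ⟨⟨⟨⟨hn1, hnX⟩, hnq⟩, hdn, hn0⟩, hsq⟩ := hp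
    have hd0 : 0 < d := Nat.pos_of_dvd_of_pos hdn (Nat.pos_of_ne_zero hn0)
    set e := n / d with he
    have hed : d * e = n := Nat.mul_div_cancel' hdn
    obtain ⟨hde, hsd, hse⟩ := Nat.squarefree_mul_iff.mp (hed ▸ hsq)
    have he0 : 0 < e := Nat.pos_of_dvd_of_pos (Nat.div_dvd_of_dvd hdn) (Nat.pos_of_ne_zero hn0)
    have hmu : (moebius n : ℝ) = (moebius d : ℝ) * (moebius e : ℝ) := by
      rw [← hed]
      rw [isMultiplicative_moebius.map_mul_of_coprime hde]
      push_cast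
      ring
    have hlog : X / (n : ℝ) = X / d / e := by
      rw [← hed, div_div]
      push_cast
      ring_nf
    have hcd : (n : ℝ) = (d : ℝ) * e := by rw [← hed]; push_cast; ring
    have hkd : kappa d ≠ 0 := ne_of_gt (kappa_pos hd0)
    have hdR : (d : ℝ) ≠ 0 := by positivity
    have heR : (e : ℝ) ≠ 0 := by positivity
    rw [hmu, hlog, hcd]
    ring
end
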